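/- Apartness is stable under substitution: for first-order terms, if two lists of terms σ̄ and τ̄ have no unifier (they are 'apart'), then for every substitution θ, the lists σ̄ and τ̄[θ] also have no unifier, provided the free variables of σ̄ and τ̄ are disjoint. -/

import Mathlib

inductive Tm where
  | var : ℕ → Tm
  | app : ℕ → List Tm → Tm
deriving Repr

def Tm.subst (θ : ℕ → Tm) : Tm → Tm
  | .var n => θ n
  | .app f args => .app f (args.attach.map fun x => Tm.subst θ x.1)
decreasing_by
  have := List.sizeOf_lt_of_mem x.2
  simp only [Tm.app.sizeOf_spec]
  omega

inductive Tm.FreeIn : ℕ → Tm → Prop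
  | var (n : ℕ) : Tm.FreeIn n (.var n)
  | app {n f t} {args : List Tm} : t ∈ args → Tm.FreeIn n t → Tm.FreeIn n (.app f args)

/-- `θ'` unifies the two lists of terms. -/
def Unifies (θ' : ℕ → Tm) (σs τs : List Tm) : Prop :=
  σs.map (Tm.subst θ') = τs.map (Tm.subst θ')

namespace Tm

@[simp]
theorem subst_var (θ : ℕ → Tm) (n : ℕ) : (var n).subst θ = θ n := by
  rw [subst]

@[simp]
theorem subst_app (θ : ℕ → Tm) (f : ℕ) (args : List Tm) :
    (app f args).subst θ = app f (args.map (subst θ)) := by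
  rw [subst, List.map_attach_eq_pmap, List.pmap_eq_map]

theorem subst_congr {θ₁ θ₂ : ℕ → Tm} :
    ∀ t : Tm, (∀ n, FreeIn n t → θ₁ n = θ₂ n) → t.subst θ₁ = t.subst θ₂
  | var n, h => by simpa using h n (.var n)
  | app f args, h => by
    simp only [subst_app, app.injEq, true_and]
    exact List.map_congr_left fun t ht => subst_congr t fun n hn => h n (.app ht hn)

theorem subst_subst (θ θ' : ℕ → Tm) :
    ∀ t : Tm, (t.subst θ).subst θ' = t.subst fun n => (θ n).subst θ'
  | var n => by simp
  | app f args => by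
    simp only [subst_app, List.map_map, app.injEq, true_and]
    exact List.map_congr_left fun t _ => subst_subst θ θ' t

theorem map_subst_congr {θ₁ θ₂ : ℕ → Tm} {ts : List Tm}
    (h : ∀ n, (∃ t ∈ ts, FreeIn n t) → θ₁ n = θ₂ n) :
    ts.map (subst θ₁) = ts.map (subst θ₂) :=
  List.map_congr_left fun t ht => subst_congr t fun n hn => h n ⟨t, ht, hn⟩

theorem map_subst_map_subst (θ θ' : ℕ → Tm) (ts : List Tm) :
    (ts.map (subst θ)).map (subst θ') = ts.map (subst fun n => (θ n).subst θ') := by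
  simp only [List.map_map, Function.comp_def, subst_subst]

end Tm

open Classical in
/-- As the variables of `σs` and `τs` are disjoint, a unifier `θ'` of `σs` and `τs[θ]` glues with
the composite `n ↦ (θ n)[θ']` into a single substitution that unifies `σs` and `τs`. -/
theorem Unifies.of_map_subst_right {σs τs : List Tm} {θ θ' : ℕ → Tm}
    (hdisj : ∀ n, (∃ t ∈ σs, Tm.FreeIn n t) → ¬ ∃ t ∈ τs, Tm.FreeIn n t)
    (h : Unifies θ' σs (τs.map (Tm.subst θ))) :
    Unifies ({n | ∃ t ∈ σs, Tm.FreeIn n t}.piecewise θ' fun n => (θ n).subst θ') σs τs := by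
  set S := {n | ∃ t ∈ σs, Tm.FreeIn n t}
  calc σs.map (Tm.subst (S.piecewise θ' _))
      = σs.map (Tm.subst θ') := Tm.map_subst_congr fun n hn => S.piecewise_eq_of_mem _ _ hn
    _ = (τs.map (Tm.subst θ)).map (Tm.subst θ') := h
    _ = τs.map (Tm.subst fun n => (θ n).subst θ') := Tm.map_subst_map_subst θ θ' τs
    _ = τs.map (Tm.subst (S.piecewise θ' _)) :=
      Tm.map_subst_congr fun n hn =>
        (S.piecewise_eq_of_notMem θ' (fun n => (θ n).subst θ') (hdisj n · hn)).symm

/-- Apartness is stable under substitution: if σ̄ and τ̄ (with disjoint free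
variables) have no unifier, then σ̄ and τ̄[θ] have no unifier, for any θ. -/
theorem apart_stable_under_subst (σs τs : List Tm)
    (hdisj : ∀ n, (∃ t ∈ σs, Tm.FreeIn n t) → ¬ ∃ t ∈ τs, Tm.FreeIn n t)
    (hapart : ¬ ∃ θ', Unifies θ' σs τs)
    (θ : ℕ → Tm) :
    ¬ ∃ θ', Unifies θ' σs (τs.map (Tm.subst θ)) :=
  fun ⟨_, h⟩ => hapart ⟨_, h.of_map_subst_right hdisj⟩
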